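/- For unit vectors representing points x, y, v, w in projective spaces, the join satisfies |x # y, v # w| ≥ min(|x,v|, |y,w|), where x # y = [a ⊕ b] ∈ P^{2t+1}(ℂ) for unit representatives a of x and b of y, and |·,·| is the Fubini–Study distance. -/

import Mathlib

/-!
With unit representatives, `|x # y, v # w|² = 1 - |⟨a, u⟩ + ⟨b, w⟩|² / 4`, and by the triangle
inequality `|⟨a, u⟩ + ⟨b, w⟩| / 2` is at most the mean, hence at most the larger, of
`|⟨a, u⟩|` and `|⟨b, w⟩|`; the larger overlap is the smaller distance.
-/

/-- Fubini–Study (sine) distance between two nonzero vectors representing points of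
projective space. -/
noncomputable def fsDist {ι : Type*} [Fintype ι] (v w : EuclideanSpace ℂ ι) : ℝ :=
  Real.sqrt (1 - ‖(@inner ℂ _ _ v w)‖ ^ 2 / (‖v‖ ^ 2 * ‖w‖ ^ 2))

/-- Join of two points given by unit representatives: concatenation `a ⊕ b`. -/
noncomputable def joinVec {ι : Type*} [Fintype ι] (a b : EuclideanSpace ℂ ι) :
    EuclideanSpace ℂ (ι ⊕ ι) :=
  (WithLp.equiv 2 ((ι ⊕ ι) → ℂ)).symm
    (Sum.elim ((WithLp.equiv 2 (ι → ℂ)) a) ((WithLp.equiv 2 (ι → ℂ)) b))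

open scoped InnerProductSpace

section JoinVec

variable {ι : Type*} [Fintype ι]

lemma inner_joinVec (a b u w : EuclideanSpace ℂ ι) :
    ⟪joinVec a b, joinVec u w⟫_ℂ = ⟪a, u⟫_ℂ + ⟪b, w⟫_ℂ := by
  simp [joinVec, PiLp.inner_apply, Fintype.sum_sum_type]

lemma norm_joinVec_sq (a b : EuclideanSpace ℂ ι) :
    ‖joinVec a b‖ ^ 2 = ‖a‖ ^ 2 + ‖b‖ ^ 2 := by
  have h := inner_joinVec a b a b
  simp only [inner_self_eq_norm_sq_to_K] at h
  exact_mod_cast h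

lemma fsDist_of_norm_eq_one {v w : EuclideanSpace ℂ ι} (hv : ‖v‖ = 1) (hw : ‖w‖ = 1) :
    fsDist v w = √(1 - ‖⟪v, w⟫_ℂ‖ ^ 2) := by
  simp [fsDist, hv, hw]

lemma fsDist_joinVec_of_norm_eq_one {a b u w : EuclideanSpace ℂ ι}
    (ha : ‖a‖ = 1) (hb : ‖b‖ = 1) (hu : ‖u‖ = 1) (hw : ‖w‖ = 1) :
    fsDist (joinVec a b) (joinVec u w) = √(1 - (‖⟪a, u⟫_ℂ + ⟪b, w⟫_ℂ‖ / 2) ^ 2) := by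
  rw [fsDist, inner_joinVec, norm_joinVec_sq, norm_joinVec_sq, ha, hb, hu, hw]
  ring_nf

end JoinVec

lemma min_sqrt_one_sub_sq_le {α β s : ℝ} (hs : 0 ≤ s) (hsαβ : s ≤ (α + β) / 2) :
    min √(1 - α ^ 2) √(1 - β ^ 2) ≤ √(1 - s ^ 2) := by
  rw [← Real.sqrt_monotone.map_min]
  refine Real.sqrt_le_sqrt ?_
  rcases le_total β α with h | h
  · have : s ^ 2 ≤ α ^ 2 := pow_le_pow_left₀ hs (by linarith) 2
    exact (min_le_left _ _).trans (by linarith)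
  · have : s ^ 2 ≤ β ^ 2 := pow_le_pow_left₀ hs (by linarith) 2
    exact (min_le_right _ _).trans (by linarith)

/-- `|x#y, v#w| ≥ min(|x,v|, |y,w|)` for points represented by unit
vectors. -/
theorem stmt17 (t : ℕ) (a b u w : EuclideanSpace ℂ (Fin (t + 1)))
    (ha : ‖a‖ = 1) (hb : ‖b‖ = 1) (hu : ‖u‖ = 1) (hw : ‖w‖ = 1) :
    min (fsDist a u) (fsDist b w) ≤ fsDist (joinVec a b) (joinVec u w) := by
  rw [fsDist_of_norm_eq_one ha hu, fsDist_of_norm_eq_one hb hw,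
    fsDist_joinVec_of_norm_eq_one ha hb hu hw]
  refine min_sqrt_one_sub_sq_le (by positivity) ?_
  gcongr
  exact norm_add_le _ _
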